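/- arXiv:2511.03428 — 5 statements merged into one kernel-verified Lean document; each statement's English description precedes it below -/
import Mathlib

section
/- If (x₁, x₂, x₃) is a positive integer solution to the generalized Markov equation with parameters λ₁, λ₂, λ₃, then the mutated triple ((x₂² + λ₁x₂x₃ + x₃²)/x₁, x₂, x₃) is again a solution to the same equation; moreover the first component (x₂² + λ₁x₂x₃ + x₃²)/x₁ equals (3 + λ₁ + λ₂ + λ₃)x₂x₃ − λ₂x₃ − λ₃x₂ − x₁, hence is a positive integer. -/
/-- Mutation μ₁ of a positive integer solution of the generalized Markov equation is again
a positive integer solution, and the new first entry equals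
(3+λ₁+λ₂+λ₃)x₂x₃ − λ₂x₃ − λ₃x₂ − x₁. -/
theorem generalized_markov_mutation_one (l1 l2 l3 : ℕ) (x1 x2 x3 : ℤ)
    (h1 : 0 < x1) (h2 : 0 < x2) (h3 : 0 < x3)
    (heq : x1 ^ 2 + x2 ^ 2 + x3 ^ 2 + l3 * x1 * x2 + l1 * x2 * x3 + l2 * x3 * x1
      = (3 + l1 + l2 + l3) * x1 * x2 * x3) :
    let y : ℤ := (3 + l1 + l2 + l3) * x2 * x3 - l2 * x3 - l3 * x2 - x1
    x1 * y = x2 ^ 2 + l1 * x2 * x3 + x3 ^ 2 ∧ 0 < y ∧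
      y ^ 2 + x2 ^ 2 + x3 ^ 2 + l3 * y * x2 + l1 * x2 * x3 + l2 * x3 * y
        = (3 + l1 + l2 + l3) * y * x2 * x3 := by
  intro y
  have hxy : x1 * ((3 + l1 + l2 + l3) * x2 * x3 - l2 * x3 - l3 * x2 - x1)
      = x2 ^ 2 + l1 * x2 * x3 + x3 ^ 2 := by
    linear_combination -heq
  have hpos : 0 < (3 + (l1:ℤ) + l2 + l3) * x2 * x3 - l2 * x3 - l3 * x2 - x1 := by
    have hprod : 0 < x1 * ((3 + (l1:ℤ) + l2 + l3) * x2 * x3 - l2 * x3 - l3 * x2 - x1) := by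
      rw [hxy]
      have : (0:ℤ) ≤ l1 * x2 * x3 := by positivity
      nlinarith [mul_pos h2 h3]
    nlinarith [hprod]
  refine ⟨hxy, hpos, ?_⟩
  linear_combination -hxy
end

section
/- The only positive integer solutions to the generalized Markov equation that contain a repeated entry are (1,1,1), (λ₁+2, 1, 1), (1, λ₂+2, 1), and (1, 1, λ₃+2). -/
lemma markov_key (p q a c : ℤ) (hp : 0 ≤ p) (hq : 0 ≤ q) (ha : 1 ≤ a) (hc : 1 ≤ c)
    (h : (2 + p) * a ^ 2 + c ^ 2 + q * a * c = (3 + p + q) * a ^ 2 * c) :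
    a = 1 ∧ (c = 1 ∨ c = 2 + p) := by
  have ha1 : a = 1 := by
    by_contra hne
    have ha2 : 2 ≤ a := lt_of_le_of_ne ha (Ne.symm hne)
    set c' : ℤ := (3 + p + q) * a ^ 2 - q * a - c with hc'
    have hvieta : c * c' = (2 + p) * a ^ 2 := by
      rw [hc']; ring_nf; linear_combination -h
    have hCpos : 0 < (2 + p) * a ^ 2 := by positivity
    have hc'pos : 0 < c' := by
      rcases lt_or_ge 0 c' with h' | h'
      · exact h'
      · nlinarith
    have hv2 : (1 - c) * (1 - c') = 1 + q * a - (1 + q) * a ^ 2 := by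
      rw [hc']; linear_combination hvieta
    have haa : 2 * a ≤ a ^ 2 := by nlinarith
    have hneg : 1 + q * a - (1 + q) * a ^ 2 < 0 := by nlinarith [mul_nonneg hq (by nlinarith : (0:ℤ) ≤ a ^ 2 - a)]
    nlinarith
  refine ⟨ha1, ?_⟩
  subst ha1
  have hz : (c - 1) * (c - (2 + p)) = 0 := by linear_combination h
  rcases mul_eq_zero.mp hz with h' | h'
  · left; linarith
  · right; linarith

/-- The only positive integer solutions of the generalized Markov equation with a repeated
entry are (1,1,1), (λ₁+2,1,1), (1,λ₂+2,1), (1,1,λ₃+2). -/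
theorem generalized_markov_repeated_entries (l1 l2 l3 x1 x2 x3 : ℕ)
    (h1 : 0 < x1) (h2 : 0 < x2) (h3 : 0 < x3)
    (heq : x1 ^ 2 + x2 ^ 2 + x3 ^ 2 + l3 * x1 * x2 + l1 * x2 * x3 + l2 * x3 * x1
      = (3 + l1 + l2 + l3) * x1 * x2 * x3)
    (hrep : x1 = x2 ∨ x2 = x3 ∨ x1 = x3) :
    (x1, x2, x3) = (1, 1, 1) ∨ (x1, x2, x3) = (l1 + 2, 1, 1) ∨
      (x1, x2, x3) = (1, l2 + 2, 1) ∨ (x1, x2, x3) = (1, 1, l3 + 2) := by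
  have heqZ : (x1 : ℤ) ^ 2 + x2 ^ 2 + x3 ^ 2 + l3 * x1 * x2 + l1 * x2 * x3 + l2 * x3 * x1
      = (3 + l1 + l2 + l3) * x1 * x2 * x3 := by exact_mod_cast heq
  rcases hrep with h | h | h
  · -- x1 = x2, a = x1, c = x3, p = l3, q = l1 + l2
    subst h
    obtain ⟨ha, hcs⟩ := markov_key (l3 : ℤ) ((l1 : ℤ) + l2) x1 x3 (by positivity)
      (by positivity) (by exact_mod_cast h1) (by exact_mod_cast h3)
      (by linear_combination heqZ)
    have hx1 : x1 = 1 := by exact_mod_cast ha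
    rcases hcs with hcs | hcs
    · left; simp [hx1]; exact_mod_cast hcs
    · right; right; right
      have : x3 = l3 + 2 := by omega
      simp [hx1, this]
  · -- x2 = x3, a = x2, c = x1, p = l1, q = l2 + l3
    subst h
    obtain ⟨ha, hcs⟩ := markov_key (l1 : ℤ) ((l2 : ℤ) + l3) x2 x1 (by positivity)
      (by positivity) (by exact_mod_cast h2) (by exact_mod_cast h1)
      (by linear_combination heqZ)
    have hx2 : x2 = 1 := by exact_mod_cast ha
    rcases hcs with hcs | hcs
    · left; simp [hx2]; exact_mod_cast hcs
    · right; left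
      have : x1 = l1 + 2 := by omega
      simp [hx2, this]
  · -- x1 = x3, a = x1, c = x2, p = l2, q = l1 + l3
    subst h
    obtain ⟨ha, hcs⟩ := markov_key (l2 : ℤ) ((l1 : ℤ) + l3) x1 x2 (by positivity)
      (by positivity) (by exact_mod_cast h1) (by exact_mod_cast h2)
      (by linear_combination heqZ)
    have hx1 : x1 = 1 := by exact_mod_cast ha
    rcases hcs with hcs | hcs
    · left; simp [hx1]; exact_mod_cast hcs
    · right; right; left
      have : x2 = l2 + 2 := by omega
      simp [hx1, this]
end

section
/- If (x₁, x₂, x₃) are real numbers with max(2x₁, 2x₂, 2x₃) = x₁ + x₂ + x₃ and x₁ is not the maximum, then the triple (x₂ + x₃, x₂, x₃) also satisfies max(2(x₂ + x₃), 2x₂, 2x₃) = (x₂ + x₃) + x₂ + x₃, i.e., the tropicalized Markov relation is preserved under the Euclid mutation replacing the first entry by the sum of the other two. -/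
/-- The tropicalized Markov relation is preserved under the Euclid mutation M₁,
provided x₁ is not the maximum. -/
theorem tropical_markov_relation_preserved (x1 x2 x3 : ℝ)
    (heq : max (2 * x1) (max (2 * x2) (2 * x3)) = x1 + x2 + x3)
    (hne : x1 ≠ max x1 (max x2 x3)) :
    max (2 * (x2 + x3)) (max (2 * x2) (2 * x3)) = (x2 + x3) + x2 + x3 := by
  have hlt : x1 < max x2 x3 := by
    by_contra hc
    push_neg at hc
    exact hne (max_eq_left hc).symm
  rcases le_total x2 x3 with h | h <;>
  simp [max_def, h] at hlt heq ⊢ <;>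
  split_ifs at * <;> linarith
end

section
/- For the classical Markov equation x² + y² + z² = 3xyz, applying the alternating mutation sequence μ₁, μ₂, μ₁, μ₂, … to the triple (1,1,1) yields triples of the form (F_{2j+1}, F_{2j−1}, 1) when j is odd and (F_{2j−1}, F_{2j+1}, 1) when j is even, where F_n is the n-th Fibonacci number. -/
/-- The Markov tree sequence starting at (1,1,1) under the alternating mutation
sequence μ₁, μ₂, μ₁, μ₂, …. -/
def altMarkov : ℕ → ℤ × ℤ × ℤ
  | 0 => (1, 1, 1)
  | j + 1 =>
    let p := altMarkov j
    if j % 2 = 0 then (3 * p.2.1 * p.2.2 - p.1, p.2.1, p.2.2)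
    else (p.1, 3 * p.1 * p.2.2 - p.2.1, p.2.2)

lemma altMarkov_step (k : ℕ) :
    altMarkov (k + 1) =
      if k % 2 = 0 then
        (3 * (altMarkov k).2.1 * (altMarkov k).2.2 - (altMarkov k).1,
          (altMarkov k).2.1, (altMarkov k).2.2)
      else ((altMarkov k).1,
          3 * (altMarkov k).1 * (altMarkov k).2.2 - (altMarkov k).2.1, (altMarkov k).2.2) := rfl

lemma fib_step (m : ℕ) : (Nat.fib (2*m+5) : ℤ) = 3 * Nat.fib (2*m+3) - Nat.fib (2*m+1) := by
  have key : Nat.fib (2*m+5) + Nat.fib (2*m+1) = 3 * Nat.fib (2*m+3) := by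
    have h1 := Nat.fib_add_two (n := 2*m+3)
    have h2 := Nat.fib_add_two (n := 2*m+2)
    have h3 := Nat.fib_add_two (n := 2*m+1)
    simp only [show 2*m+3+2 = 2*m+5 from rfl, show 2*m+2+2 = 2*m+4 from rfl,
      show 2*m+1+2 = 2*m+3 from rfl, show 2*m+2+1 = 2*m+3 from rfl,
      show 2*m+1+1 = 2*m+2 from rfl, show 2*m+3+1 = 2*m+4 from rfl] at h1 h2 h3
    omega
  have := congrArg (Nat.cast : ℕ → ℤ) key
  push_cast at this
  linarith

/-- Alternating μ₁, μ₂ on (1,1,1) for the Markov equation yields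
(F_{2j+1}, F_{2j−1}, 1) for j odd and (F_{2j−1}, F_{2j+1}, 1) for j even. -/
theorem altMarkov_eq_fib (j : ℕ) (hj : 1 ≤ j) :
    (Odd j → altMarkov j = ((Nat.fib (2 * j + 1) : ℤ), (Nat.fib (2 * j - 1) : ℤ), 1)) ∧
    (Even j → altMarkov j = ((Nat.fib (2 * j - 1) : ℤ), (Nat.fib (2 * j + 1) : ℤ), 1)) := by
  induction j with
  | zero => omega
  | succ n ih =>
    rcases Nat.eq_zero_or_pos n with rfl | hn
    · refine ⟨fun _ => ?_, fun h => absurd h (by decide)⟩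
      rw [altMarkov_step 0]
      norm_num [altMarkov]
    · obtain ⟨h1, h2⟩ := ih hn
      obtain ⟨m, rfl⟩ : ∃ m, n = m + 1 := ⟨n - 1, by omega⟩
      have hfib : (Nat.fib (2 * (m + 1 + 1) + 1) : ℤ)
          = 3 * Nat.fib (2 * (m + 1) + 1) - Nat.fib (2 * (m + 1) - 1) := by
        have := fib_step m
        have e1 : 2 * (m + 1 + 1) + 1 = 2 * m + 5 := by ring
        have e2 : 2 * (m + 1) + 1 = 2 * m + 3 := by ring
        have e3 : 2 * (m + 1) - 1 = 2 * m + 1 := by omega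
        rw [e1, e2, e3]; exact this
      have e4 : 2 * (m + 1 + 1) - 1 = 2 * (m + 1) + 1 := by omega
      rcases Nat.even_or_odd (m + 1) with he | ho
      · have hp := h2 he
        have hmod : (m + 1) % 2 = 0 := Nat.even_iff.mp he
        refine ⟨fun _ => ?_, fun h => absurd h (by simpa using Even.add_one he)⟩
        rw [altMarkov_step (m + 1), hmod, if_pos rfl, hp, hfib, e4]
        simp
      · have hp := h1 ho
        have hmod : (m + 1) % 2 = 1 := Nat.odd_iff.mp ho
        refine ⟨fun h => absurd h (by simpa using Odd.add_one ho), fun _ => ?_⟩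
        rw [altMarkov_step (m + 1), hmod, hfib, e4, hp]
        simp
end

section
/- For the k-generalized Euclid tree with k ≥ 0: applying the mutations M_{2;k} and M_{3;k} alternately (starting with M_{2;k}) n times to an initial triple (X, Y, Z) of positive reals yields (X, n·X + Z + n·k, (n−1)·X + Z + (n−1)·k) if n is odd, and (X, (n−1)·X + Z + (n−1)·k, n·X + Z + n·k) if n is even. -/
/-- Alternating application of two maps, starting with `f`. -/
def altIter (f g : ℝ × ℝ × ℝ → ℝ × ℝ × ℝ) : ℕ → ℝ × ℝ × ℝ → ℝ × ℝ × ℝ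
  | 0, p => p
  | n + 1, p => (if n % 2 = 0 then f else g) (altIter f g n p)

/-- Alternating M_{2;k}, M_{3;k} (starting with M_{2;k}) n times on a positive initial triple
(X,Y,Z) gives (X, n·X+Z+n·k, (n−1)·X+Z+(n−1)·k) if n is odd and
(X, (n−1)·X+Z+(n−1)·k, n·X+Z+n·k) if n is even. -/
theorem alt_generalized_euclid_M2_M3 (k : ℝ) (hk : 0 ≤ k)
    (X Y Z : ℝ) (hX : 0 < X) (hY : 0 < Y) (hZ : 0 < Z) (n : ℕ) (hn : 1 ≤ n) :
    altIter (fun p => (p.1, k + p.1 + p.2.2, p.2.2))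
        (fun p => (p.1, p.2.1, k + p.1 + p.2.1)) n (X, Y, Z)
      = if Odd n then (X, n * X + Z + n * k, ((n : ℝ) - 1) * X + Z + ((n : ℝ) - 1) * k)
        else (X, ((n : ℝ) - 1) * X + Z + ((n : ℝ) - 1) * k, n * X + Z + n * k) := by
  induction n with
  | zero => omega
  | succ m ih =>
    rcases Nat.eq_zero_or_pos m with rfl | hm
    · simp [altIter]; norm_num; ring
    · rw [altIter, ih hm]
      rcases Nat.even_or_odd m with he | ho
      · have h2 : m % 2 = 0 := Nat.even_iff.mp he
        have hno : ¬ Odd m := by simpa using he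
        have hodd : Odd (m + 1) := Even.add_one he
        simp only [h2, if_pos, if_neg hno, if_pos hodd, Nat.cast_add, Nat.cast_one]
        norm_num; ring
      · have h2 : m % 2 = 1 := Nat.odd_iff.mp ho
        have hne : ¬ Odd (m + 1) := by simp [Nat.odd_add_one, Nat.not_even_iff_odd, ho]
        simp only [h2, if_pos ho, if_neg hne, Nat.cast_add, Nat.cast_one]
        norm_num; ring
end
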